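/- Let B₁ = [[0,-1,-1],[-1,1,1-n],[-1,1-n,1]] and B₂ = [[0,-1,-1],[-1,2-n,0],[-1,0,2-n]] in M₃(ℤ) for n ≥ 2. Then the cokernel of the map (B₁ B₂): ℤ⁶ → ℤ³ is isomorphic to ℤ/2, the quotient ker(B₁ B₂)/im(−B₂; B₁) is isomorphic to ℤ/2, and ker(−B₂; B₁) = 0. -/

import Mathlib

/-!
Write `d₁ = (B₁ B₂)` and `d₀ = (−B₂; B₁)`. Then `d₁ ∘ d₀ = 0` because `B₁` and `B₂` commute, and
`d₀` is injective because `det B₁ = −2n ≠ 0`. The image of `d₁` is the kernel of the parity form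
`w ↦ n w₀ + w₁ + w₂ mod 2`, and the image of `d₀` is the kernel, inside `ker d₁`, of the parity
form `(u, v) ↦ u₁ + v₀ + v₂ mod 2`; both forms are onto `ℤ/2`. For the second claim, an element
of `ker d₁` is determined by its coordinates `u₁, v₀, v₂`, and on the image of `d₀` these are
`x₀ - (2 - n) x₁, -x₁ - x₂, -x₀ + (1 - n) x₁ + x₂`, which can be matched exactly when
`u₁ + v₀ + v₂` is even.
-/

open LinearMap

theorem Matrix.ker_toLin'_eq_bot_of_det_ne_zero {ι A : Type*} [Fintype ι] [DecidableEq ι]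
    [CommRing A] [IsDomain A] {M : Matrix ι ι A} (h : M.det ≠ 0) :
    ker (Matrix.toLin' M) = ⊥ :=
  eq_bot_iff.mpr fun v hv =>
    by_contra fun hv0 => h (Matrix.exists_mulVec_eq_zero_iff.mp ⟨v, hv0, hv⟩)

theorem Matrix.toLin'_coprod_comp_toLin'_prod_eq_zero {ι R : Type*} [Fintype ι] [DecidableEq ι]
    [CommRing R] {A B : Matrix ι ι R} (h : Commute A B) :
    (Matrix.toLin' A).coprod (Matrix.toLin' B) ∘ₗ (Matrix.toLin' (-B)).prod (Matrix.toLin' A) =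
      0 := by
  rw [coprod_comp_prod, ← Matrix.toLin'_mul, ← Matrix.toLin'_mul, ← map_add, Matrix.mul_neg,
    h.eq, neg_add_cancel, map_zero]

theorem ZMod.surjective_of_map_eq_one {M : Type*} [AddCommGroup M] {k : ℕ} [NeZero k]
    (ψ : M →ₗ[ℤ] ZMod k) {m : M} (h : ψ m = 1) : Function.Surjective ψ :=
  fun z => ⟨z.val • m, by simp [h]⟩

theorem Submodule.nonempty_quotient_addEquiv_of_eq_ker {R M P : Type*} [Ring R] [AddCommGroup M]
    [Module R M] [AddCommGroup P] [Module R P] {p : Submodule R M} {ψ : M →ₗ[R] P}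
    (h : p = ker ψ) (hψ : Function.Surjective ψ) : Nonempty ((M ⧸ p) ≃+ P) :=
  ⟨((Submodule.quotEquivOfEq _ _ h).trans (ψ.quotKerEquivOfSurjective hψ)).toAddEquiv⟩

def matB₁ (n : ℤ) : Matrix (Fin 3) (Fin 3) ℤ := !![0, -1, -1; -1, 1, 1 - n; -1, 1 - n, 1]

def matB₂ (n : ℤ) : Matrix (Fin 3) (Fin 3) ℤ := !![0, -1, -1; -1, 2 - n, 0; -1, 0, 2 - n]

def rowMap (n : ℤ) : (Fin 3 → ℤ) × (Fin 3 → ℤ) →ₗ[ℤ] Fin 3 → ℤ :=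
  (Matrix.toLin' (matB₁ n)).coprod (Matrix.toLin' (matB₂ n))

def colMap (n : ℤ) : (Fin 3 → ℤ) →ₗ[ℤ] (Fin 3 → ℤ) × (Fin 3 → ℤ) :=
  (Matrix.toLin' (-matB₂ n)).prod (Matrix.toLin' (matB₁ n))

def cokerParity (n : ℤ) : (Fin 3 → ℤ) →ₗ[ℤ] ZMod 2 :=
  Algebra.linearMap ℤ (ZMod 2) ∘ₗ dotProductBilin ℤ ℤ ![n, 1, 1]

def homologyParity : (Fin 3 → ℤ) × (Fin 3 → ℤ) →ₗ[ℤ] ZMod 2 :=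
  Algebra.linearMap ℤ (ZMod 2) ∘ₗ
    (dotProductBilin ℤ ℤ ![0, 1, 0]).coprod (dotProductBilin ℤ ℤ ![1, 0, 1])

@[simp] lemma cokerParity_apply (n : ℤ) (w : Fin 3 → ℤ) :
    cokerParity n w = ((n * w 0 + w 1 + w 2 : ℤ) : ZMod 2) := by
  simp [cokerParity, dotProduct, Fin.sum_univ_three]

@[simp] lemma homologyParity_apply (u v : Fin 3 → ℤ) :
    homologyParity (u, v) = ((u 1 + v 0 + v 2 : ℤ) : ZMod 2) := by
  simp [homologyParity, dotProduct, Fin.sum_univ_three, add_assoc]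

lemma rowMap_apply (n : ℤ) (u v : Fin 3 → ℤ) :
    rowMap n (u, v) = ![-u 1 - u 2 - v 1 - v 2,
      -u 0 + u 1 + (1 - n) * u 2 - v 0 + (2 - n) * v 1,
      -u 0 + (1 - n) * u 1 + u 2 - v 0 + (2 - n) * v 2] := by
  ext i
  fin_cases i <;> simp [rowMap, matB₁, matB₂, dotProduct, Fin.sum_univ_three] <;> ring

lemma colMap_apply (n : ℤ) (x : Fin 3 → ℤ) :
    colMap n x = (![x 1 + x 2, x 0 - (2 - n) * x 1, x 0 - (2 - n) * x 2],
      ![-x 1 - x 2, -x 0 + x 1 + (1 - n) * x 2, -x 0 + (1 - n) * x 1 + x 2]) := by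
  ext i <;> fin_cases i <;> simp [colMap, matB₁, matB₂, dotProduct, Fin.sum_univ_three] <;> ring

lemma det_matB₁ (n : ℤ) : (matB₁ n).det = -2 * n := by
  simp [matB₁, Matrix.det_fin_three]; ring

lemma commute_matB₁_matB₂ (n : ℤ) : Commute (matB₁ n) (matB₂ n) := by
  ext i j
  fin_cases i <;> fin_cases j <;> simp [matB₁, matB₂, Matrix.mul_apply, Fin.sum_univ_three] <;> ring

lemma rowMap_comp_colMap (n : ℤ) : rowMap n ∘ₗ colMap n = 0 :=
  Matrix.toLin'_coprod_comp_toLin'_prod_eq_zero (commute_matB₁_matB₂ n)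

lemma homologyParity_colMap (n : ℤ) (x : Fin 3 → ℤ) : homologyParity (colMap n x) = 0 := by
  rw [colMap_apply, homologyParity_apply, ZMod.intCast_eq_zero_iff_even]
  exact ⟨-x 1, by simp; ring⟩

lemma range_rowMap (n : ℤ) : range (rowMap n) = ker (cokerParity n) := by
  apply le_antisymm
  · rintro _ ⟨⟨u, v⟩, rfl⟩
    rw [mem_ker, cokerParity_apply, rowMap_apply, ZMod.intCast_eq_zero_iff_even]
    exact ⟨-u 0 - v 0 + (1 - n) * (u 1 + u 2 + v 1 + v 2), by simp; ring⟩
  · intro w hw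
    rw [mem_ker, cokerParity_apply, ZMod.intCast_eq_zero_iff_even] at hw
    obtain ⟨k, hk⟩ := hw
    refine ⟨(![k - w 0 - w 1 - w 2, w 0 + w 1 - k, 0], ![0, -w 0, k - w 0 - w 1]), ?_⟩
    rw [rowMap_apply]
    ext i
    fin_cases i <;> simp
    · ring
    · linear_combination hk
    · ring

lemma cokerParity_surjective (n : ℤ) : Function.Surjective (cokerParity n) :=
  ZMod.surjective_of_map_eq_one _ (m := ![0, 1, 0]) (by simp)

lemma eq_zero_of_rowMap_eq_zero {n : ℤ} {p : (Fin 3 → ℤ) × (Fin 3 → ℤ)} (hp : rowMap n p = 0)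
    (h₁ : p.1 1 = 0) (h₂ : p.2 0 = 0) (h₃ : p.2 2 = 0) : p = 0 := by
  obtain ⟨u, v⟩ := p
  simp only [rowMap_apply, Matrix.cons_eq_zero_iff, Matrix.zero_empty, and_true] at hp
  obtain ⟨e₀, e₁, e₂⟩ := hp
  simp only at h₁ h₂ h₃
  have hu₀ : u 0 = 0 := by
    have : 2 * u 0 = 0 := by linear_combination -e₁ - (2 - n) * e₀ - e₂ - 2 * h₂
    omega
  have hu₂ : u 2 = 0 := by linear_combination e₂ + hu₀ - (1 - n) * h₁ + h₂ - (2 - n) * h₃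
  have hv₁ : v 1 = 0 := by linear_combination -e₀ - h₁ - hu₂ - h₃
  ext i <;> fin_cases i <;> simp [*]

lemma range_colMap (n : ℤ) : range (colMap n) = ker (rowMap n) ⊓ ker homologyParity := by
  apply le_antisymm
  · rintro _ ⟨x, rfl⟩
    exact ⟨congr($(rowMap_comp_colMap n) x), homologyParity_colMap n x⟩
  · rintro ⟨u, v⟩ ⟨hrow, hpar⟩
    rw [SetLike.mem_coe, mem_ker, homologyParity_apply, ZMod.intCast_eq_zero_iff_even] at hpar
    obtain ⟨j, hj⟩ := hpar
    refine ⟨![u 1 - (2 - n) * j, -j, j - v 0], sub_eq_zero.mp ?_⟩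
    apply eq_zero_of_rowMap_eq_zero
    · rw [map_sub, ← comp_apply, rowMap_comp_colMap, LinearMap.zero_apply, hrow, sub_zero]
    all_goals simp [colMap_apply, Matrix.vecHead, Matrix.vecTail]
    linear_combination -hj

lemma ker_colMap {n : ℤ} (hn : n ≠ 0) : ker (colMap n) = ⊥ := by
  have hdet : (matB₁ n).det ≠ 0 := by rw [det_matB₁]; exact mul_ne_zero (by norm_num) hn
  rw [colMap, ker_prod, Matrix.ker_toLin'_eq_bot_of_det_ne_zero hdet, inf_bot_eq]

lemma comap_range_colMap (n : ℤ) :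
    (range (colMap n)).comap (ker (rowMap n)).subtype =
      ker (homologyParity ∘ₗ (ker (rowMap n)).subtype) := by
  rw [range_colMap, Submodule.comap_inf, Submodule.comap_subtype_self, top_inf_eq, ker_comp]

lemma homologyParity_comp_subtype_surjective (n : ℤ) :
    Function.Surjective (homologyParity ∘ₗ (ker (rowMap n)).subtype) := by
  refine ZMod.surjective_of_map_eq_one _ (m := ⟨(![-1, 0, 0], ![1, 0, 0]), ?_⟩) (by simp)
  rw [mem_ker, rowMap_apply]
  simp

/-- For `B₁ = [[0,-1,-1],[-1,1,1-n],[-1,1-n,1]]` and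
`B₂ = [[0,-1,-1],[-1,2-n,0],[-1,0,2-n]]` with `n ≥ 2`: the cokernel of
`(B₁ B₂) : ℤ⁶ → ℤ³` is `ℤ/2`, the quotient `ker(B₁ B₂)/im(−B₂; B₁)` is `ℤ/2`,
and `ker(−B₂; B₁) = 0`. -/
theorem stmt_15 (n : ℕ) (hn : 2 ≤ n)
    (B₁ B₂ : Matrix (Fin 3) (Fin 3) ℤ)
    (hB₁ : B₁ = !![0, -1, -1; -1, 1, 1 - (n : ℤ); -1, 1 - (n : ℤ), 1])
    (hB₂ : B₂ = !![0, -1, -1; -1, 2 - (n : ℤ), 0; -1, 0, 2 - (n : ℤ)]) :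
    Nonempty
      (((Fin 3 → ℤ) ⧸ LinearMap.range
          ((Matrix.toLin' B₁).coprod (Matrix.toLin' B₂))) ≃+ ZMod 2) ∧
    Nonempty
      ((LinearMap.ker ((Matrix.toLin' B₁).coprod (Matrix.toLin' B₂)) ⧸
          Submodule.comap (LinearMap.ker ((Matrix.toLin' B₁).coprod (Matrix.toLin' B₂))).subtype
            (LinearMap.range ((Matrix.toLin' (-B₂)).prod (Matrix.toLin' B₁)))) ≃+ ZMod 2) ∧
    LinearMap.ker ((Matrix.toLin' (-B₂)).prod (Matrix.toLin' B₁)) = ⊥ := by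
  subst hB₁ hB₂
  exact ⟨Submodule.nonempty_quotient_addEquiv_of_eq_ker (range_rowMap n)
      (cokerParity_surjective n),
    Submodule.nonempty_quotient_addEquiv_of_eq_ker (comap_range_colMap n)
      (homologyParity_comp_subtype_surjective n),
    ker_colMap (by omega)⟩
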